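/- arXiv:1601.07702 — 5 statements merged into one kernel-verified Lean document; each statement's English description precedes it below -/
import Mathlib

section
/- For every real α with 0 < α ≤ 1, the function f(α) = 1 + α(1-α) + α·ln(α) satisfies f(α) ≥ 0.838. Moreover the minimum of f over (0,1] is attained at the unique solution α* of 2 - 2α + ln(α) = 0. -/
open Real Set

private noncomputable def Fq (a : ℝ) : ℝ := 1 + a * (1 - a) + a * Real.log a
private noncomputable def Gq (a : ℝ) : ℝ := 2 - 2 * a + Real.log a

private lemma hderivF {x : ℝ} (hx : 0 < x) : HasDerivAt Fq (Gq x) x := by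
  have h1 : HasDerivAt (fun a : ℝ => a * (1 - a)) (1 * (1 - x) + x * (0 - 1)) x :=
    (hasDerivAt_id x).mul ((hasDerivAt_const x 1).sub (hasDerivAt_id x))
  have h2 := Real.hasDerivAt_mul_log hx.ne'
  have h3 := ((hasDerivAt_const x 1).add h1).add h2
  have h4 : Gq x = 0 + (1 * (1 - x) + x * (0 - 1)) + (Real.log x + 1) := by
    unfold Gq; ring
  rw [h4]
  exact h3

private lemma hderivG {x : ℝ} (hx : 0 < x) : HasDerivAt Gq (-2 + x⁻¹) x := by
  have h1 : HasDerivAt (fun a : ℝ => 2 - 2 * a) (0 - 2 * 1) x :=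
    (hasDerivAt_const x 2).sub ((hasDerivAt_id x).const_mul 2)
  have h2 := h1.add (Real.hasDerivAt_log hx.ne')
  have : (-2 + x⁻¹ : ℝ) = 0 - 2 * 1 + x⁻¹ := by ring
  rw [this]
  exact h2

private lemma Gmono : StrictMonoOn Gq (Set.Ioc 0 (1/2 : ℝ)) := by
  apply strictMonoOn_of_deriv_pos (convex_Ioc _ _)
  · exact fun x hx => (hderivG hx.1).continuousAt.continuousWithinAt
  · intro x hx
    rw [interior_Ioc] at hx
    rw [(hderivG hx.1).deriv]
    have h := mul_inv_cancel₀ hx.1.ne'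
    have h2 : (0:ℝ) < x⁻¹ := inv_pos.mpr hx.1
    nlinarith [hx.2]

private lemma Ganti : StrictAntiOn Gq (Set.Icc (1/2 : ℝ) 1) := by
  apply strictAntiOn_of_deriv_neg (convex_Icc _ _)
  · exact fun x hx => (hderivG (by linarith [hx.1] : (0:ℝ) < x)).continuousAt.continuousWithinAt
  · intro x hx
    rw [interior_Icc] at hx
    have hx0 : (0:ℝ) < x := by linarith [hx.1]
    rw [(hderivG hx0).deriv]
    have h := mul_inv_cancel₀ hx0.ne'
    have h2 : (0:ℝ) < x⁻¹ := inv_pos.mpr hx0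
    nlinarith [hx.1]

private lemma log_pt1 : Real.log 0.1 < -1.8 := by
  rw [Real.log_lt_iff_lt_exp (by norm_num), Real.exp_neg]
  have h2 : Real.exp 1.8 < 10 := by
    have he := Real.exp_one_lt_d9
    calc Real.exp 1.8 ≤ Real.exp 2 := Real.exp_le_exp.mpr (by norm_num)
    _ = Real.exp 1 * Real.exp 1 := by rw [← Real.exp_add]; norm_num
    _ < 10 := by nlinarith [Real.exp_pos 1]
  nlinarith [Real.exp_pos 1.8, mul_inv_cancel₀ (Real.exp_pos 1.8).ne', inv_pos.mpr (Real.exp_pos 1.8)]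

private lemma log_pt2033 : (-1.5934 : ℝ) < Real.log 0.2033 := by
  rw [Real.lt_log_iff_exp_lt (by norm_num), Real.exp_neg]
  have h : (4.9189 : ℝ) < Real.exp 1.5934 := by
    have hs := Real.sum_le_exp_of_nonneg (x := 1.5934) (by norm_num) 9
    simp only [Finset.sum_range_succ, Finset.sum_range_zero, Nat.factorial] at hs
    norm_num at hs
    linarith
  nlinarith [Real.exp_pos 1.5934, mul_inv_cancel₀ (Real.exp_pos 1.5934).ne',
    inv_pos.mpr (Real.exp_pos 1.5934)]

theorem stmt_1 :
    (∀ α : ℝ, 0 < α → α ≤ 1 →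
      (0.838 : ℝ) ≤ 1 + α * (1 - α) + α * Real.log α) ∧
    (∃! αs : ℝ, αs ∈ Set.Ioc (0:ℝ) 1 ∧ 2 - 2 * αs + Real.log αs = 0 ∧
      ∀ α ∈ Set.Ioc (0:ℝ) 1,
        1 + αs * (1 - αs) + αs * Real.log αs ≤ 1 + α * (1 - α) + α * Real.log α) := by
  -- find the root αs of Gq in [0.1, 0.2033]
  have hg01 : Gq 0.1 < 0 := by
    have := log_pt1; unfold Gq; norm_num; linarith
  have hg2033 : 0 < Gq 0.2033 := by
    have := log_pt2033; unfold Gq; norm_num; linarith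
  have hcont : ContinuousOn Gq (Icc (0.1:ℝ) 0.2033) :=
    fun x hx => (hderivG (by linarith [hx.1] : (0:ℝ) < x)).continuousAt.continuousWithinAt
  have hIVT := intermediate_value_Icc (by norm_num : (0.1:ℝ) ≤ 0.2033) hcont
  obtain ⟨αs, hmem, hgαs⟩ := hIVT ⟨hg01.le, hg2033.le⟩
  have hαs0 : (0:ℝ) < αs := by linarith [hmem.1]
  have hαslt : αs < 0.2033 := by
    rcases lt_or_eq_of_le hmem.2 with h | h
    · exact h
    · exfalso; rw [h] at hgαs; rw [hgαs] at hg2033; exact lt_irrefl 0 hg2033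
  have hαs1 : αs ≤ 1 := by linarith
  have hαshalf : αs ≤ 1/2 := by linarith
  -- sign of Gq
  have Gq1 : Gq 1 = 0 := by unfold Gq; simp
  have Gpos : ∀ x : ℝ, αs < x → x < 1 → 0 < Gq x := by
    intro x h1 h2
    rcases le_or_gt x (1/2) with hx | hx
    · have := Gmono ⟨hαs0, hαshalf⟩ ⟨by linarith, hx⟩ h1
      rw [hgαs] at this; exact this
    · have := Ganti ⟨hx.le, h2.le⟩ ⟨by norm_num, le_refl 1⟩ h2
      rw [Gq1] at this; exact this
  have Gneg : ∀ x : ℝ, 0 < x → x < αs → Gq x < 0 := by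
    intro x h1 h2
    have := Gmono ⟨h1, by linarith⟩ ⟨hαs0, hαshalf⟩ h2
    rw [hgαs] at this; exact this
  -- monotonicity of Fq
  have FcontP : ∀ s : Set ℝ, (∀ x ∈ s, (0:ℝ) < x) → ContinuousOn Fq s :=
    fun s hs x hx => (hderivF (hs x hx)).continuousAt.continuousWithinAt
  have Fmono : StrictMonoOn Fq (Icc αs 1) := by
    apply strictMonoOn_of_deriv_pos (convex_Icc _ _)
    · exact FcontP _ (fun x hx => lt_of_lt_of_le hαs0 hx.1)
    · intro x hx
      rw [interior_Icc] at hx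
      rw [(hderivF (hαs0.trans hx.1)).deriv]
      exact Gpos x hx.1 hx.2
  have Fanti : StrictAntiOn Fq (Ioc 0 αs) := by
    apply strictAntiOn_of_deriv_neg (convex_Ioc _ _)
    · exact FcontP _ (fun x hx => hx.1)
    · intro x hx
      rw [interior_Ioc] at hx
      rw [(hderivF hx.1).deriv]
      exact Gneg x hx.1 hx.2
  -- minimality
  have hmin : ∀ α ∈ Set.Ioc (0:ℝ) 1, Fq αs ≤ Fq α := by
    rintro α ⟨hα0, hα1⟩
    rcases lt_trichotomy α αs with h | h | h
    · exact (Fanti ⟨hα0, h.le⟩ ⟨hαs0, le_refl _⟩ h).le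
    · rw [h]
    · exact (Fmono ⟨le_refl _, hαs1⟩ ⟨h.le, hα1⟩ h).le
  -- value bound at αs
  have hlogαs : Real.log αs = 2 * αs - 2 := by
    have := hgαs; unfold Gq at this; linarith
  have hFαs : (0.838 : ℝ) ≤ Fq αs := by
    unfold Fq
    rw [hlogαs]
    nlinarith [mul_pos (by linarith : (0:ℝ) < 0.2033 - αs) (by linarith : (0:ℝ) < 0.7967 - αs)]
  constructor
  · intro α h1 h2
    have := hmin α ⟨h1, h2⟩
    calc (0.838:ℝ) ≤ Fq αs := hFαs
    _ ≤ Fq α := this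
    _ = 1 + α * (1 - α) + α * Real.log α := rfl
  · refine ⟨αs, ⟨⟨hαs0, hαs1⟩, hgαs, hmin⟩, ?_⟩
    rintro β ⟨⟨hβ0, hβ1⟩, hβeq, hβmin⟩
    have hGβ : Gq β = 0 := hβeq
    rcases lt_trichotomy β αs with h | h | h
    · exact absurd hGβ (Gneg β hβ0 h).ne
    · exact h
    · rcases lt_or_eq_of_le hβ1 with h1 | h1
      · exact absurd hGβ (Gpos β h h1).ne'
      · exfalso
        have h2 : Fq αs < Fq 1 := Fmono ⟨le_refl _, hαs1⟩ ⟨by linarith, le_refl _⟩ (by linarith)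
        have h3 : Fq β ≤ Fq αs := hβmin αs ⟨hαs0, hαs1⟩
        rw [h1] at h3
        linarith
end

section
/- For every real α with 0 < α < 1, the function h(α) = 1 + α·ln(e·α/((e-1)·α + 1)) satisfies h(α) ≥ 0.8135. -/
open Real Finset in
theorem stmt_3 (α : ℝ) (h0 : 0 < α) (h1 : α < 1) :
    (0.8135 : ℝ) ≤
      1 + α * Real.log (Real.exp 1 * α / ((Real.exp 1 - 1) * α + 1)) := by
  have he1 : (1 : ℝ) < Real.exp 1 := by linarith [Real.exp_one_gt_d9]
  have heup : Real.exp 1 < 2.7182818286 := Real.exp_one_lt_d9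
  have hu : 0 < (Real.exp 1 - 1) * α + 1 := by nlinarith
  have hx : 0 < Real.exp 1 * α / ((Real.exp 1 - 1) * α + 1) :=
    div_pos (mul_pos (Real.exp_pos 1) h0) hu
  set x : ℝ := Real.exp 1 * α / ((Real.exp 1 - 1) * α + 1) with hxdef
  set s : ℝ := -0.67965 with hsdef
  -- tangent-line lower bound for log at exp s
  have hlog : s + 1 - Real.exp s / x ≤ Real.log x := by
    have h2 : 1 - (x / Real.exp s)⁻¹ ≤ Real.log (x / Real.exp s) :=
      Real.one_sub_inv_le_log_of_pos (div_pos hx (Real.exp_pos s))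
    rw [Real.log_div (ne_of_gt hx) (ne_of_gt (Real.exp_pos s)), Real.log_exp] at h2
    have : (x / Real.exp s)⁻¹ = Real.exp s / x := by
      field_simp
    rw [this] at h2
    linarith
  set E : ℝ := Real.exp (s - 1) with hEdef
  have hEpos : 0 < E := Real.exp_pos _
  -- key algebraic identity: α * (exp s / x) = E * ((e-1)α + 1)
  have hexps : Real.exp s = E * Real.exp 1 := by
    rw [hEdef, ← Real.exp_add]; ring_nf
  have hkey : α * (Real.exp s / x) = E * ((Real.exp 1 - 1) * α + 1) := by
    rw [hexps, hxdef]
    field_simp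
  -- numeric bound on E = exp (-1.67965)
  have hsum : (5.363678 : ℝ) ≤ Real.exp 1.67965 := by
    refine le_trans ?_ (Real.sum_le_exp_of_nonneg (by norm_num) 16)
    simp only [Finset.sum_range_succ, Finset.sum_range_zero]
    norm_num [Nat.factorial]
  have hE : E ≤ (5.363678 : ℝ)⁻¹ := by
    have hEeq : E = (Real.exp 1.67965)⁻¹ := by
      rw [hEdef, ← Real.exp_neg]
      norm_num [hsdef]
    rw [hEeq]
    exact inv_anti₀ (by norm_num) hsum
  -- two endpoint inequalities
  have c1 : (0.8135 : ℝ) ≤ 1 - E := by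
    have : (5.363678 : ℝ)⁻¹ ≤ 0.1865 := by norm_num
    linarith
  have c2 : (0.8135 : ℝ) ≤ s + 2 - Real.exp 1 * E := by
    have : Real.exp 1 * E ≤ 2.7182818286 * (5.363678 : ℝ)⁻¹ :=
      mul_le_mul heup.le hE hEpos.le (by norm_num)
    rw [hsdef]
    norm_num at this ⊢
    linarith
  have hmain : 1 + α * (s + 1) - E * ((Real.exp 1 - 1) * α + 1) ≤ 1 + α * Real.log x := by
    have h4 := mul_le_mul_of_nonneg_left hlog h0.le
    rw [mul_sub, hkey] at h4
    linarith
  nlinarith [mul_nonneg (by linarith : (0:ℝ) ≤ 1 - α) (by linarith : (0:ℝ) ≤ 1 - E - 0.8135),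
    mul_nonneg h0.le (by linarith : (0:ℝ) ≤ s + 2 - Real.exp 1 * E - 0.8135)]
end

section
/- For all real α with 1/e < α ≤ 1 and all real v ≥ 1: v - ((1-1/e)(v-1)+α) + ((1-1/e)(v-1)+α)·ln(((1-1/e)(v-1)+α)/v) - 1 + 2α > 0. -/
open Real Set

-- chord bound for exp on [-1,0]
lemma chord (u : ℝ) (h1 : -1 ≤ u) (h0 : u ≤ 0) :
    Real.exp u ≤ 1 + (1 - 1 / Real.exp 1) * u := by
  have h := convexOn_exp.2 (mem_univ (-1 : ℝ)) (mem_univ (0 : ℝ))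
    (by linarith : (0:ℝ) ≤ -u) (by linarith : (0:ℝ) ≤ 1 + u) (by ring)
  simp only [smul_eq_mul] at h
  have e1 : (-u) * (-1) + (1 + u) * 0 = u := by ring
  rw [e1] at h
  rw [Real.exp_neg, Real.exp_zero] at h
  have he : (0:ℝ) < Real.exp 1 := Real.exp_pos 1
  calc Real.exp u ≤ -u * (Real.exp 1)⁻¹ + (1 + u) * 1 := h
    _ = 1 + (1 - 1 / Real.exp 1) * u := by field_simp; ring

theorem stmt_9 (α v : ℝ) (hα : 1 / Real.exp 1 < α) (hα1 : α ≤ 1) (hv : 1 ≤ v) :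
    0 < v - ((1 - 1 / Real.exp 1) * (v - 1) + α) +
        ((1 - 1 / Real.exp 1) * (v - 1) + α) *
          Real.log (((1 - 1 / Real.exp 1) * (v - 1) + α) / v) - 1 + 2 * α := by
  have he : (0:ℝ) < Real.exp 1 := Real.exp_pos 1
  have he1 : (1:ℝ) < Real.exp 1 := by
    have := Real.add_one_lt_exp (one_ne_zero); linarith
  have he2 : (2:ℝ) < Real.exp 1 := by
    have := Real.exp_one_gt_d9; linarith
  set p : ℝ := 1 - 1 / Real.exp 1 with hp
  have hp0 : 0 < p := by
    have : 1 / Real.exp 1 < 1 := by rw [div_lt_one he]; exact he1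
    simp only [hp]; linarith
  have hp1 : p < 1 := by
    have : 0 < 1 / Real.exp 1 := by positivity
    simp only [hp]; linarith
  have hα0 : 0 < α := lt_trans (by positivity) hα
  -- b x > 0 for x ≥ 1
  have hbpos : ∀ x : ℝ, 1 ≤ x → 0 < p * (x - 1) + α := by
    intro x hx; nlinarith
  set G : ℝ → ℝ := fun x => x - (p * (x - 1) + α) +
      (p * (x - 1) + α) * (Real.log (p * (x - 1) + α) - Real.log x) - 1 + 2 * α with hG
  -- derivative of G at any x ≥ 1 is D x, and 0 ≤ D x
  have hderiv : ∀ x : ℝ, 1 ≤ x →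
      HasDerivAt G (1 + p * (Real.log (p * (x - 1) + α) - Real.log x)
        - (p * (x - 1) + α) / x) x := by
    intro x hx
    have hx0 : 0 < x := lt_of_lt_of_le one_pos hx
    have hb0 : 0 < p * (x - 1) + α := hbpos x hx
    have h1 : HasDerivAt (fun y : ℝ => p * (y - 1) + α) p x := by
      simpa using (((hasDerivAt_id x).sub_const 1).const_mul p).add_const α
    have h2 : HasDerivAt (fun y : ℝ => Real.log (p * (y - 1) + α)) (p / (p * (x - 1) + α)) x := by
      have := (Real.hasDerivAt_log hb0.ne').comp x h1
      simpa [Function.comp_def, div_eq_inv_mul] using this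
    have h3 : HasDerivAt Real.log (1 / x) x := by
      simpa using Real.hasDerivAt_log hx0.ne'
    have h4 : HasDerivAt (fun y : ℝ => Real.log (p * (y - 1) + α) - Real.log y)
        (p / (p * (x - 1) + α) - 1 / x) x := h2.sub h3
    have h5 := h1.mul h4
    have h6 := (((hasDerivAt_id' x).sub h1).add h5).sub_const 1
    have h7 := h6.add_const (2 * α)
    convert h7 using 1
    · rfl
    · rfl
    · rfl
    field_simp
    ring
  have hmono : MonotoneOn G (Ici (1:ℝ)) := by
    apply monotoneOn_of_deriv_nonneg (convex_Ici 1)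
    · intro x hx
      exact ((hderiv x hx).continuousAt).continuousWithinAt
    · intro x hx
      rw [interior_Ici] at hx
      exact (hderiv x (le_of_lt hx)).differentiableAt.differentiableWithinAt
    · intro x hx
      rw [interior_Ici] at hx
      have hx1 : 1 ≤ x := le_of_lt hx
      have hx0 : 0 < x := lt_of_lt_of_le one_pos hx1
      rw [(hderiv x hx1).deriv]
      set b := p * (x - 1) + α with hbdef
      have hb0 : 0 < b := hbpos x hx1
      set t := b / x with ht
      have ht0 : 0 < t := div_pos hb0 hx0
      have htle : t ≤ 1 := by
        rw [ht, div_le_one hx0]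
        nlinarith
      have hαe : 1 < α * Real.exp 1 := (div_lt_iff₀ he).mp hα
      have hbe : (p * (x - 1) + α) * Real.exp 1 = (Real.exp 1 - 1) * (x - 1) + α * Real.exp 1 := by
        simp only [hp]; field_simp
      have htge : 1 / Real.exp 1 ≤ t := by
        rw [ht, div_le_div_iff₀ he hx0]
        nlinarith [mul_nonneg (by linarith : (0:ℝ) ≤ Real.exp 1 - 2) (by linarith : (0:ℝ) ≤ x - 1)]
      have hlt : Real.log b - Real.log x = Real.log t := by
        rw [ht, Real.log_div hb0.ne' hx0.ne']
      rw [hlt]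
      have hu1 : -1 ≤ Real.log t := by
        rw [Real.le_log_iff_exp_le ht0, Real.exp_neg, ← one_div]
        exact htge
      have hu0 : Real.log t ≤ 0 := Real.log_nonpos (le_of_lt ht0) htle
      have hc := chord (Real.log t) hu1 hu0
      rw [Real.exp_log ht0] at hc
      simp only [hp]
      linarith
  have hG1 : 0 < G 1 := by
    have : G 1 = α * (1 + Real.log α) := by
      simp only [hG]; rw [Real.log_one]; ring
    rw [this]
    have hlog : -1 < Real.log α := by
      rw [Real.lt_log_iff_exp_lt hα0, Real.exp_neg, ← one_div]
      exact hα
    nlinarith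
  have hGv : G 1 ≤ G v := hmono (mem_Ici.mpr le_rfl) (mem_Ici.mpr hv) hv
  have hbv : 0 < p * (v - 1) + α := hbpos v hv
  have hv0 : 0 < v := lt_of_lt_of_le one_pos hv
  have hfg : Real.log ((p * (v - 1) + α) / v) = Real.log (p * (v - 1) + α) - Real.log v :=
    Real.log_div hbv.ne' hv0.ne'
  rw [hfg]
  have : v - (p * (v - 1) + α) + (p * (v - 1) + α) *
      (Real.log (p * (v - 1) + α) - Real.log v) - 1 + 2 * α = G v := rfl
  rw [this]
  linarith
end

section
/- Let n ≥ 2 and v > 0. Suppose F : [0, v] → [0,1] is a CDF of the winning price in a coarse equilibrium of a first-price auction with n bidders each of value v, i.e., there exists α ≥ 0 with α·n = v - E (where E = ∫₀^v (1 - F(x)) dx is the expected winning price) and F(x) ≤ α/(v - x) for all x ∈ [0, v). Then E ≥ v·(1 - n/e^{n-1}). -/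
theorem stmt_12 (n : ℕ) (hn : 2 ≤ n) (v : ℝ) (hv : 0 < v)
    (F : ℝ → ℝ) (hF01 : ∀ x ∈ Set.Icc (0:ℝ) v, F x ∈ Set.Icc (0:ℝ) 1)
    (hFmono : MonotoneOn F (Set.Icc (0:ℝ) v))
    (α : ℝ) (hα : 0 ≤ α)
    (hαn : α * n = v - ∫ x in (0:ℝ)..v, (1 - F x))
    (hdev : ∀ x : ℝ, 0 ≤ x → x < v → F x ≤ α / (v - x)) :
    v * (1 - n / Real.exp 1 ^ (n - 1)) ≤ ∫ x in (0:ℝ)..v, (1 - F x) := by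
  set E : ℝ := ∫ x in (0:ℝ)..v, (1 - F x) with hE
  have hvle : (0:ℝ) ≤ v := hv.le
  have hFint : IntervalIntegrable F MeasureTheory.volume 0 v := by
    apply MonotoneOn.intervalIntegrable
    rwa [Set.uIcc_of_le hvle]
  have hint : IntervalIntegrable (fun x => 1 - F x) MeasureTheory.volume 0 v :=
    (intervalIntegrable_const).sub hFint
  -- E ≥ 0
  have hEnonneg : 0 ≤ E := by
    apply intervalIntegral.integral_nonneg hvle
    intro x hx
    have := (hF01 x hx).2
    linarith
  -- rewrite the goal using exp
  have hexp : (n : ℝ) / Real.exp 1 ^ (n - 1) = n * Real.exp (1 - n) := by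
    have h1 : Real.exp 1 ^ (n - 1) = Real.exp ((n : ℝ) - 1) := by
      rw [← Real.exp_nat_mul, mul_one]
      congr 1
      have : (1:ℕ) ≤ n := le_trans (by norm_num) hn
      push_cast [Nat.cast_sub this]
      ring
    rw [h1, div_eq_mul_inv, ← Real.exp_neg]
    ring_nf
  rcases eq_or_lt_of_le hα with hα0 | hαpos
  · -- α = 0 : F = 0 on [0,v), E = v
    have hF0 : ∀ x, 0 ≤ x → x < v → F x = 0 := by
      intro x hx hxv
      have h1 := hdev x hx hxv
      have h2 := (hF01 x ⟨hx, hxv.le⟩).1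
      rw [← hα0] at h1
      simp at h1
      linarith
    have hEv : E = v := by
      have : (∫ x in (0:ℝ)..v, (1 - F x)) = ∫ x in (0:ℝ)..v, (1:ℝ) := by
        apply intervalIntegral.integral_congr_ae
        filter_upwards [MeasureTheory.ae_iff.2 (by simp : MeasureTheory.volume {x : ℝ | ¬ x ≠ v} = 0)] with x hx hxmem
        rw [Set.uIoc_of_le hvle] at hxmem
        rw [hF0 x hxmem.1.le (lt_of_le_of_ne hxmem.2 hx)]
        ring
      rw [hE, this]
      simp
    have hpos : (0:ℝ) ≤ (n : ℝ) * Real.exp (1 - n) := by positivity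
    rw [hEv]
    rw [hexp] at *
    nlinarith
  · -- α > 0
    have hn2 : (2:ℝ) ≤ (n:ℝ) := by exact_mod_cast hn
    have hαv : α < v := by nlinarith
    set c : ℝ := v - α with hc
    have hcpos : 0 < c := by simp [hc]; linarith
    -- key: E ≥ ∫₀^c (1 - α/(v-x)) = v - α + α log(α/v)
    have hint1 : IntervalIntegrable (fun x => 1 - F x) MeasureTheory.volume 0 c :=
      hint.mono_set (by rw [Set.uIcc_of_le hcpos.le, Set.uIcc_of_le hvle]; exact Set.Icc_subset_Icc le_rfl (by linarith))
    have hint2 : IntervalIntegrable (fun x => 1 - F x) MeasureTheory.volume c v :=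
      hint.mono_set (by rw [Set.uIcc_of_le (by linarith : c ≤ v), Set.uIcc_of_le hvle]; exact Set.Icc_subset_Icc hcpos.le le_rfl)
    have hsplit : E = (∫ x in (0:ℝ)..c, (1 - F x)) + ∫ x in c..v, (1 - F x) := by
      rw [hE, intervalIntegral.integral_add_adjacent_intervals hint1 hint2]
    have htail : 0 ≤ ∫ x in c..v, (1 - F x) := by
      apply intervalIntegral.integral_nonneg (by linarith)
      intro x hx
      have := (hF01 x ⟨by linarith [hx.1], hx.2⟩).2
      linarith
    -- continuous integrand on [0,c]
    have hcont : ContinuousOn (fun x : ℝ => 1 - α / (v - x)) (Set.Icc 0 c) := by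
      apply ContinuousOn.sub continuousOn_const
      apply ContinuousOn.div continuousOn_const (by fun_prop)
      intro x hx
      have : x ≤ c := hx.2
      have : x < v := by linarith
      intro h; linarith [sub_eq_zero.mp h]
    have hint3 : IntervalIntegrable (fun x : ℝ => 1 - α / (v - x)) MeasureTheory.volume 0 c := by
      apply ContinuousOn.intervalIntegrable
      rwa [Set.uIcc_of_le hcpos.le]
    have hmono : (∫ x in (0:ℝ)..c, (1 - α / (v - x))) ≤ ∫ x in (0:ℝ)..c, (1 - F x) := by
      apply intervalIntegral.integral_mono_on hcpos.le hint3 hint1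
      intro x hx
      have hxv : x < v := by linarith [hx.2]
      have := hdev x hx.1 hxv
      linarith
    -- compute the integral
    have hcomp : (∫ x in (0:ℝ)..c, (1 - α / (v - x))) = c + α * Real.log α - α * Real.log v := by
      have hderiv : ∀ x ∈ Set.uIcc (0:ℝ) c,
          HasDerivAt (fun y => y + α * Real.log (v - y)) (1 - α / (v - x)) x := by
        intro x hx
        rw [Set.uIcc_of_le hcpos.le] at hx
        have hne : v - x ≠ 0 := by
          have : x ≤ c := hx.2
          intro h; have := sub_eq_zero.mp h; simp [hc] at *; linarith
        have h1 : HasDerivAt (fun y : ℝ => v - y) (-1) x := by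
          simpa using (hasDerivAt_id x).const_sub v
        have h2 : HasDerivAt (fun y : ℝ => Real.log (v - y)) ((v - x)⁻¹ * (-1)) x :=
          (Real.hasDerivAt_log hne).comp x h1
        have h3 := ((hasDerivAt_id x).add (h2.const_mul α))
        convert h3 using 1
        · rfl
        · rfl
        · rfl
        field_simp
        ring
      rw [intervalIntegral.integral_eq_sub_of_hasDerivAt hderiv hint3]
      have : v - c = α := by simp [hc]
      rw [this]
      norm_num
    -- so E ≥ v - α + α (log α - log v)
    have hkey : v - α + α * (Real.log α - Real.log v) ≤ E := by
      have : c + α * Real.log α - α * Real.log v ≤ E := by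
        rw [hsplit]; rw [← hcomp]; linarith
      simp only [hc] at this ⊢
      linarith
    -- E = v - α n, so α(log α - log v) ≤ α(1-n)
    have hEeq : E = v - α * n := by linarith
    have hlog : Real.log α - Real.log v ≤ 1 - n := by
      have h1 : α * (Real.log α - Real.log v) ≤ α * (1 - n) := by nlinarith
      exact le_of_mul_le_mul_left (by linarith [h1]) hαpos
    have hαbound : α ≤ v * Real.exp (1 - n) := by
      have h1 : Real.log (α / v) ≤ 1 - n := by
        rw [Real.log_div (ne_of_gt hαpos) (ne_of_gt hv)]; exact hlog
      have h2 : α / v ≤ Real.exp (1 - n) := by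
        calc α / v = Real.exp (Real.log (α / v)) := (Real.exp_log (by positivity)).symm
        _ ≤ Real.exp (1 - n) := Real.exp_le_exp.mpr h1
      calc α = (α / v) * v := by field_simp
      _ ≤ Real.exp (1 - n) * v := by nlinarith
      _ = v * Real.exp (1 - n) := by ring
    rw [hexp]
    have hnn : (0:ℝ) ≤ (n:ℝ) := by linarith
    nlinarith [Real.exp_pos (1 - (n:ℝ))]
end

section
/- For n ≥ 2 and v > 0, setting α = v/e^{n-1} and F(x) = α/(v-x) for 0 ≤ x ≤ v - α, the expected value E = ∫₀^{v-α}(1 - F(x))dx equals v·(1 - n/e^{n-1}), and (v - E)/n = α. -/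
theorem stmt_13 (n : ℕ) (hn : 2 ≤ n) (v : ℝ) (hv : 0 < v)
    (α : ℝ) (hα : α = v / Real.exp 1 ^ (n - 1)) :
    (∫ x in (0:ℝ)..(v - α), (1 - α / (v - x))) = v * (1 - n / Real.exp 1 ^ (n - 1)) ∧
    (v - ∫ x in (0:ℝ)..(v - α), (1 - α / (v - x))) / n = α := by
  have he : (1:ℝ) < Real.exp 1 := by
    have := Real.add_one_le_exp 1; linarith
  have hE : (1:ℝ) < Real.exp 1 ^ (n - 1) := one_lt_pow₀ he (by omega)
  have hE0 : (0:ℝ) < Real.exp 1 ^ (n - 1) := by positivity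
  have hα0 : 0 < α := by rw [hα]; positivity
  have hαv : α < v := by rw [hα]; exact div_lt_self hv hE
  have hb : (0:ℝ) ≤ v - α := by linarith
  have hpos : ∀ x ∈ Set.uIcc (0:ℝ) (v - α), 0 < v - x := by
    intro x hx
    rw [Set.uIcc_of_le hb] at hx
    have := hx.2; linarith
  have hderiv : ∀ x ∈ Set.uIcc (0:ℝ) (v - α),
      HasDerivAt (fun x => x + α * Real.log (v - x)) (1 - α / (v - x)) x := by
    intro x hx
    have hvx : 0 < v - x := hpos x hx
    have h1 : HasDerivAt (fun x : ℝ => v - x) (-1) x := by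
      simpa using (hasDerivAt_id x).const_sub v
    have h2 : HasDerivAt (fun x => Real.log (v - x)) ((v - x)⁻¹ * (-1)) x :=
      (Real.hasDerivAt_log hvx.ne').comp x h1
    have h3 := (hasDerivAt_id x).add (h2.const_mul α)
    convert h3 using 1
    · rfl
    · rfl
    · rfl
    ring
  have hcont : IntervalIntegrable (fun x => 1 - α / (v - x)) MeasureTheory.volume 0 (v - α) := by
    apply ContinuousOn.intervalIntegrable
    apply ContinuousOn.sub continuousOn_const
    apply ContinuousOn.div continuousOn_const
    · exact (continuousOn_const.sub continuousOn_id)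
    · intro x hx; exact (hpos x hx).ne'
  have hint : (∫ x in (0:ℝ)..(v - α), (1 - α / (v - x)))
      = ((v - α) + α * Real.log (v - (v - α))) - (0 + α * Real.log (v - 0)) :=
    intervalIntegral.integral_eq_sub_of_hasDerivAt hderiv hcont
  have hlog : Real.log v - Real.log α = (n - 1 : ℕ) := by
    have : Real.log α = Real.log v - Real.log (Real.exp 1 ^ (n - 1)) := by
      rw [hα, Real.log_div hv.ne' hE0.ne']
    rw [this, Real.log_pow, Real.log_exp]
    ring
  have hn1 : ((n - 1 : ℕ) : ℝ) = (n : ℝ) - 1 := by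
    have : (1:ℕ) ≤ n := by omega
    push_cast [Nat.cast_sub this]; ring
  have hE' : (∫ x in (0:ℝ)..(v - α), (1 - α / (v - x))) = v - n * α := by
    rw [hint]
    have : Real.log α - Real.log v = -((n:ℝ) - 1) := by
      rw [← hn1, ← hlog]; ring
    have h4 : v - (v - α) = α := by ring
    rw [h4, sub_zero]
    have h5 : α * (Real.log α - Real.log v) = α * -((n:ℝ) - 1) := by rw [this]
    nlinarith [h5]
  constructor
  · rw [hE', hα]
    field_simp
  · rw [hE']
    have hn0 : (n : ℝ) ≠ 0 := by positivity
    field_simp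
    ring
end
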